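/- Let F : P(ℝ^d) → ℝ be convex, of class C^1 and bounded from below, and let σ > 0. Suppose m* ∈ P_2(ℝ^d) is absolutely continuous with respect to Lebesgue measure, its density (denoted again m*) is positive Lebesgue-a.e., H(m*) < ∞, and there exists a constant c ∈ ℝ such that (δF/δm)(m*,x) + (σ²/2) log m*(x) + (σ²/2) U(x) = c for Lebesgue-a.e. x ∈ ℝ^d. Then V^σ(m) ≥ V^σ(m*) for every m ∈ P(ℝ^d), i.e. m* minimizes V^σ. -/

import Mathlib

open MeasureTheory Real Filter Topology
open scoped ENNReal NNReal RealInnerProductSpace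

noncomputable section

/-- Euclidean space `ℝ^d`. -/
abbrev Rd (d : ℕ) : Type := EuclideanSpace ℝ (Fin d)

/-- Borel probability measures. -/
abbrev PM (α : Type*) [MeasurableSpace α] := MeasureTheory.ProbabilityMeasure α

/-- Finite second moment, i.e. membership in `P₂`. -/
def P2 {α : Type*} [MeasurableSpace α] [NormedAddCommGroup α] (μ : PM α) : Prop :=
  Integrable (fun x => ‖x‖ ^ 2) (μ : Measure α)

/-- The convex combination `(1-λ)·μ + λ·ν` of probability measures (with `λ` clamped
to `[0,1]`, which is the only range in which it is ever used). -/
def convComb {α : Type*} [MeasurableSpace α] (lam : ℝ) (μ ν : PM α) : PM α :=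
  ⟨(ENNReal.ofReal (1 - max 0 (min lam 1))) • (μ : Measure α)
      + (ENNReal.ofReal (max 0 (min lam 1))) • (ν : Measure α), by
    have ht0 : 0 ≤ max 0 (min lam 1) := le_max_left _ _
    have ht1 : max 0 (min lam 1) ≤ 1 := max_le zero_le_one (min_le_right _ _)
    constructor
    simp only [Measure.coe_add, Measure.coe_smul, Pi.add_apply, Pi.smul_apply,
      measure_univ, smul_eq_mul, mul_one]
    rw [← ENNReal.ofReal_add (by linarith) ht0]
    norm_num⟩

/-- `F` is of class `C¹` on the space of probability measures, with linear functional
derivative `DF`. -/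
structure IsC1 {α : Type*} [MeasurableSpace α] [TopologicalSpace α] [OpensMeasurableSpace α]
    (F : PM α → ℝ) (DF : PM α → α → ℝ) : Prop where
  bounded : ∃ C, ∀ m x, |DF m x| ≤ C
  cont : Continuous fun p : PM α × α => DF p.1 p.2
  deriv_eq : ∀ m m' : PM α,
    F m' - F m = ∫ lam in (0:ℝ)..1,
      (∫ x, DF (convComb lam m m') x ∂(m' : Measure α)
        - ∫ x, DF (convComb lam m m') x ∂(m : Measure α))

/-- Convexity of a function of probability measures. -/
def ConvexPM {α : Type*} [MeasurableSpace α] (F : PM α → ℝ) : Prop :=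
  ∀ (m m' : PM α) (a : ℝ), 0 ≤ a → a ≤ 1 →
    F (convComb a m m') ≤ (1 - a) * F m + a * F m'

/-- Assumptions on the Gibbs potential `U`. -/
structure GibbsPotential {d : ℕ} (U : Rd d → ℝ) : Prop where
  smooth : ContDiff ℝ (⊤ : ℕ∞) U
  lipGrad : ∃ K : ℝ≥0, LipschitzWith K (fun x => gradient U x)
  diss : ∃ cU cU' : ℝ, 0 < cU ∧ ∀ x : Rd d, cU * ‖x‖ ^ 2 + cU' ≤ ⟪gradient U x, x⟫
  isDensity : ∫ x, Real.exp (-U x) = 1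

/-- `ρ` is a density (w.r.t. Lebesgue) of the probability measure `m`, for which the
relative entropy integrand `ρ log ρ + ρ U` (note `log (ρ/e^{-U}) = log ρ + U`) is integrable. -/
def EntPred {d : ℕ} (U : Rd d → ℝ) (m : PM (Rd d)) (ρ : Rd d → ℝ) : Prop :=
  Measurable ρ ∧ (∀ x, 0 ≤ ρ x) ∧
    (m : Measure (Rd d)) = (volume : Measure (Rd d)).withDensity (fun x => ENNReal.ofReal (ρ x)) ∧
    Integrable (fun x => ρ x * Real.log (ρ x) + ρ x * U x)

/-- The relative entropy `H(m) = ∫ m log (m / e^{-U})`, valued in `(-∞, ∞]`;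
it equals `+∞` unless `m` is absolutely continuous with an integrable entropy integrand
(for probability measures the negative part of the integrand is always integrable, so this
agrees with the usual convention). -/
def relEnt {d : ℕ} (U : Rd d → ℝ) (m : PM (Rd d)) : EReal :=
  letI : Decidable (∃ ρ, EntPred U m ρ) := Classical.propDecidable _
  if h : ∃ ρ, EntPred U m ρ then
    ((∫ x, (h.choose x * Real.log (h.choose x) + h.choose x * U x) : ℝ) : EReal)
  else ⊤

/-- The free energy `V^σ(m) = F(m) + (σ²/2) H(m)`, valued in `(-∞, ∞]`. -/
def freeEnergy {d : ℕ} (σ : ℝ) (U : Rd d → ℝ) (F : PM (Rd d) → ℝ) (m : PM (Rd d)) : EReal :=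
  (F m : EReal) + ((σ ^ 2 / 2 : ℝ) : EReal) * relEnt U m

/-- The 2-Wasserstein distance. -/
def W2 {α : Type*} [MeasurableSpace α] [NormedAddCommGroup α] (μ ν : PM α) : ℝ :=
  sInf { r : ℝ | ∃ cpl : Measure (α × α),
    cpl.map Prod.fst = (μ : Measure α) ∧ cpl.map Prod.snd = (ν : Measure α) ∧
    r = ((∫⁻ p, ENNReal.ofReal (‖p.1 - p.2‖ ^ 2) ∂cpl).toReal) ^ (1 / 2 : ℝ) }

/-- Divergence of a vector field on `ℝ^d`. -/
def diverg {d : ℕ} (v : Rd d → Rd d) (x : Rd d) : ℝ :=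
  LinearMap.trace ℝ (Rd d) (fderiv ℝ v x : Rd d →ₗ[ℝ] Rd d)
/-! ### Auxiliary lemmas -/

section Aux

lemma clamp_eq {t : ℝ} (h0 : 0 ≤ t) (h1 : t ≤ 1) : max 0 (min t 1) = t := by
  rw [min_eq_left h1, max_eq_right h0]

lemma convComb_coe {α : Type*} [MeasurableSpace α] {t : ℝ} (h0 : 0 ≤ t) (h1 : t ≤ 1)
    (μ ν : PM α) : (convComb t μ ν : Measure α)
      = ENNReal.ofReal (1 - t) • (μ : Measure α) + ENNReal.ofReal t • (ν : Measure α) := by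
  simp [convComb, clamp_eq h0 h1]

lemma convComb_zero {α : Type*} [MeasurableSpace α] (μ ν : PM α) : convComb 0 μ ν = μ := by
  apply MeasureTheory.ProbabilityMeasure.toMeasure_injective
  rw [convComb_coe le_rfl zero_le_one]
  simp

lemma convComb_comp {α : Type*} [MeasurableSpace α] {l t : ℝ}
    (hl0 : 0 ≤ l) (hl1 : l ≤ 1) (ht0 : 0 ≤ t) (ht1 : t ≤ 1) (μ ν : PM α) :
    convComb l μ (convComb t μ ν) = convComb (l * t) μ ν := by
  apply MeasureTheory.ProbabilityMeasure.toMeasure_injective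
  rw [convComb_coe hl0 hl1, convComb_coe ht0 ht1,
    convComb_coe (mul_nonneg hl0 ht0) (mul_le_one₀ hl1 ht0 ht1)]
  rw [smul_add, smul_smul, smul_smul, ← add_assoc, ← add_smul,
    ← ENNReal.ofReal_mul hl0, ← ENNReal.ofReal_mul hl0,
    ← ENNReal.ofReal_add (by linarith) (by nlinarith)]
  ring_nf

lemma convComb_clamp {α : Type*} [MeasurableSpace α] (s : ℝ) (μ ν : PM α) :
    convComb s μ ν = convComb (max 0 (min s 1)) μ ν := by
  apply MeasureTheory.ProbabilityMeasure.toMeasure_injective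
  rw [convComb_coe (le_max_left _ _) (max_le zero_le_one (min_le_right _ _))]
  rfl

lemma integral_convComb {α : Type*} [MeasurableSpace α] {t : ℝ} (h0 : 0 ≤ t) (h1 : t ≤ 1)
    (μ ν : PM α) (f : α → ℝ) (hfμ : Integrable f (μ : Measure α))
    (hfν : Integrable f (ν : Measure α)) :
    ∫ x, f x ∂(convComb t μ ν : Measure α)
      = (1 - t) * ∫ x, f x ∂(μ : Measure α) + t * ∫ x, f x ∂(ν : Measure α) := by
  rw [convComb_coe h0 h1, integral_add_measure
      (hfμ.smul_measure ENNReal.ofReal_ne_top) (hfν.smul_measure ENNReal.ofReal_ne_top),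
    integral_smul_measure, integral_smul_measure,
    ENNReal.toReal_ofReal (by linarith), ENNReal.toReal_ofReal h0]
  simp [smul_eq_mul]

lemma continuous_convComb {α : Type*} [MeasurableSpace α] [TopologicalSpace α]
    [OpensMeasurableSpace α] (μ ν : PM α) : Continuous fun s : ℝ => convComb s μ ν := by
  rw [continuous_iff_continuousAt]
  intro s₀
  rw [ContinuousAt, MeasureTheory.ProbabilityMeasure.tendsto_iff_forall_integral_tendsto]
  intro f
  have key : ∀ s : ℝ, ∫ x, f x ∂(convComb s μ ν : Measure α)
      = (1 - max 0 (min s 1)) * ∫ x, f x ∂(μ : Measure α)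
        + max 0 (min s 1) * ∫ x, f x ∂(ν : Measure α) := by
    intro s
    rw [convComb_clamp s μ ν]
    exact integral_convComb (le_max_left _ _) (max_le zero_le_one (min_le_right _ _)) μ ν f
      (f.integrable _) (f.integrable _)
  simp only [key]
  have hc : Continuous fun s : ℝ => (1 - max 0 (min s 1)) * ∫ x, f x ∂(μ : Measure α)
      + max 0 (min s 1) * ∫ x, f x ∂(ν : Measure α) := by fun_prop
  exact hc.continuousAt

lemma integrable_of_bdd_cont {α : Type*} [MeasurableSpace α] [TopologicalSpace α]
    [OpensMeasurableSpace α] {f : α → ℝ} (hf : Continuous f) {C : ℝ} (hC : ∀ x, |f x| ≤ C)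
    (μ : Measure α) [IsFiniteMeasure μ] : Integrable f μ :=
  (integrable_const C).mono' hf.aestronglyMeasurable
    (Filter.Eventually.of_forall (fun x => by simpa [Real.norm_eq_abs] using hC x))

/-- The gradient inequality for a convex `C¹` function of measures. -/
lemma grad_ineq {α : Type*} [MeasurableSpace α] [TopologicalSpace α] [OpensMeasurableSpace α]
    {F : PM α → ℝ} {DF : PM α → α → ℝ} (hC1 : IsC1 F DF) (hConv : ConvexPM F)
    (m m' : PM α) :
    (∫ x, DF m x ∂(m' : Measure α)) - ∫ x, DF m x ∂(m : Measure α) ≤ F m' - F m := by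
  obtain ⟨C₀, hC₀⟩ := hC1.bounded
  set C := |C₀| with hCdef
  have hC : ∀ (mm : PM α) (x : α), |DF mm x| ≤ C := fun mm x => (hC₀ mm x).trans (le_abs_self C₀)
  have hcontx : ∀ mm : PM α, Continuous fun x => DF mm x :=
    fun mm => hC1.cont.comp (Continuous.prodMk_right mm)
  have hint : ∀ mm μ : PM α, Integrable (DF mm) (μ : Measure α) :=
    fun mm μ => integrable_of_bdd_cont (hcontx mm) (hC mm) _
  set Φ : ℝ → ℝ := fun s =>
    (∫ x, DF (convComb s m m') x ∂(m' : Measure α))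
      - ∫ x, DF (convComb s m m') x ∂(m : Measure α) with hΦ
  have hDFcont : ∀ x : α, Continuous fun s : ℝ => DF (convComb s m m') x := fun x =>
    hC1.cont.comp ((continuous_convComb m m').prodMk continuous_const)
  have hIcont : ∀ μ : PM α,
      Continuous fun s : ℝ => ∫ x, DF (convComb s m m') x ∂(μ : Measure α) := by
    intro μ
    apply continuous_of_dominated (bound := fun _ => C)
    · exact fun s => (hcontx _).aestronglyMeasurable
    · exact fun s => Filter.Eventually.of_forall fun x => by
        simpa [Real.norm_eq_abs] using hC _ x
    · exact integrable_const C
    · exact Filter.Eventually.of_forall hDFcont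
  have hΦcont : Continuous Φ := (hIcont m').sub (hIcont m)
  have habs : ∀ (s : ℝ) (μ : PM α),
      |∫ x, DF (convComb s m m') x ∂(μ : Measure α)| ≤ C := by
    intro s μ
    have := norm_integral_le_of_norm_le_const (μ := (μ : Measure α))
      (f := fun x => DF (convComb s m m') x) (C := C)
      (Filter.Eventually.of_forall fun x => by simpa [Real.norm_eq_abs] using hC _ x)
    simpa [Real.norm_eq_abs] using this
  have hΦbdd : ∀ s, |Φ s| ≤ 2 * C := by
    intro s
    have h1 := habs s m'
    have h2 := habs s m
    rw [hΦ]
    calc |(∫ x, DF (convComb s m m') x ∂(m' : Measure α))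
          - ∫ x, DF (convComb s m m') x ∂(m : Measure α)|
        ≤ |∫ x, DF (convComb s m m') x ∂(m' : Measure α)|
          + |∫ x, DF (convComb s m m') x ∂(m : Measure α)| := abs_sub _ _
      _ ≤ 2 * C := by linarith
  have hstep : ∀ t : ℝ, 0 < t → t ≤ 1 → (∫ l in (0:ℝ)..1, Φ (l * t)) ≤ F m' - F m := by
    intro t ht0 ht1
    have hd := hC1.deriv_eq m (convComb t m m')
    have hre : Set.EqOn
        (fun l => (∫ x, DF (convComb l m (convComb t m m')) x ∂((convComb t m m') : Measure α))
          - ∫ x, DF (convComb l m (convComb t m m')) x ∂(m : Measure α))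
        (fun l => t * Φ (l * t)) (Set.uIcc (0:ℝ) 1) := by
      intro l hl
      rw [Set.uIcc_of_le zero_le_one] at hl
      simp only
      rw [convComb_comp hl.1 hl.2 ht0.le ht1,
        integral_convComb ht0.le ht1 m m' _ (hint _ _) (hint _ _)]
      simp only [hΦ]; ring
    rw [intervalIntegral.integral_congr hre, intervalIntegral.integral_const_mul] at hd
    have hconv := hConv m m' t ht0.le ht1
    have hmul : t * ∫ l in (0:ℝ)..1, Φ (l * t) ≤ t * (F m' - F m) := by
      rw [← hd]; linarith
    exact le_of_mul_le_mul_left hmul ht0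
  have hG : Continuous fun t : ℝ => ∫ l in (0:ℝ)..1, Φ (l * t) := by
    apply intervalIntegral.continuous_of_dominated_interval (bound := fun _ => 2 * C)
    · exact fun t => ((hΦcont.comp (by fun_prop)).aestronglyMeasurable)
    · exact fun t => Filter.Eventually.of_forall fun l _ => by
        simpa [Real.norm_eq_abs] using hΦbdd (l * t)
    · exact intervalIntegrable_const
    · exact Filter.Eventually.of_forall fun l _ => hΦcont.comp (by fun_prop)
  have hlim : Filter.Tendsto (fun t : ℝ => ∫ l in (0:ℝ)..1, Φ (l * t))
      (nhdsWithin (0:ℝ) (Set.Ioi 0)) (nhds (Φ 0)) := by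
    have h0 : (∫ l in (0:ℝ)..1, Φ (l * 0)) = Φ 0 := by simp
    have h2 : Filter.Tendsto (fun t : ℝ => ∫ l in (0:ℝ)..1, Φ (l * t))
        (nhdsWithin (0:ℝ) (Set.Ioi 0)) (nhds (∫ l in (0:ℝ)..1, Φ (l * 0))) :=
      (hG.tendsto (0:ℝ)).mono_left nhdsWithin_le_nhds
    rwa [h0] at h2
  have hfin : Φ 0 ≤ F m' - F m := by
    apply le_of_tendsto hlim
    filter_upwards [Ioc_mem_nhdsGT_of_mem (Set.mem_Ico.mpr ⟨le_rfl, zero_lt_one⟩)] with t ht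
    exact hstep t ht.1 ht.2
  rw [hΦ] at hfin
  simpa [convComb_zero] using hfin

end Aux

/-- **Sufficiency of the first order condition**: if `m*` has an a.e. positive density with
finite entropy and `(δF/δm)(m*,·) + (σ²/2) log m* + (σ²/2) U` is a.e. constant, then `m*`
minimizes the free energy `V^σ`. -/
theorem first_order_condition_sufficient {d : ℕ}
    (F : PM (Rd d) → ℝ) (DF : PM (Rd d) → Rd d → ℝ) (U : Rd d → ℝ) (σ : ℝ) (hσ : 0 < σ)
    (hU : GibbsPotential U) (hC1 : IsC1 F DF) (hConv : ConvexPM F)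
    (hBddBelow : BddBelow (Set.range F))
    (mstar : PM (Rd d)) (hP2 : P2 mstar)
    (ρ : Rd d → ℝ) (hρ_meas : Measurable ρ) (hρ_nonneg : ∀ x, 0 ≤ ρ x)
    (hdens : (mstar : Measure (Rd d))
      = (volume : Measure (Rd d)).withDensity fun x => ENNReal.ofReal (ρ x))
    (hρ_pos : ∀ᵐ x ∂(volume : Measure (Rd d)), 0 < ρ x)
    (hent : relEnt U mstar < ⊤)
    (c : ℝ)
    (hfoc : ∀ᵐ x ∂(volume : Measure (Rd d)),
      DF mstar x + σ ^ 2 / 2 * Real.log (ρ x) + σ ^ 2 / 2 * U x = c) :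
    ∀ m : PM (Rd d), freeEnergy σ U F mstar ≤ freeEnergy σ U F m := by
  intro m
  obtain ⟨C₀, hC₀⟩ := hC1.bounded
  have hσ2 : (0:ℝ) < σ ^ 2 / 2 := by positivity
  have hUcont : Continuous U := hU.smooth.continuous
  set s : Rd d → ℝ := fun x => Real.log (ρ x) + U x with hs_def
  have hs_meas : Measurable s :=
    (Real.measurable_log.comp hρ_meas).add hUcont.measurable
  set B : ℝ := 2 / σ ^ 2 * (|c| + |C₀|) with hB_def
  have hsb : ∀ᵐ x ∂(volume : Measure (Rd d)), |s x| ≤ B := by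
    filter_upwards [hfoc] with x hx
    have hDF : |DF mstar x| ≤ |C₀| := (hC₀ mstar x).trans (le_abs_self _)
    have h1 : σ ^ 2 / 2 * s x = c - DF mstar x := by
      simp only [hs_def]; linear_combination hx
    have hσ2' : (σ:ℝ) ≠ 0 := ne_of_gt hσ
    have hxs : s x = 2 / σ ^ 2 * (c - DF mstar x) := by
      rw [← h1]; field_simp
    rw [hxs, hB_def, abs_mul, abs_of_pos (by positivity : (0:ℝ) < 2 / σ ^ 2)]
    gcongr
    exact (abs_sub _ _).trans (add_le_add le_rfl hDF)
  -- key facts about probability densities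
  have hkey : ∀ (μ : PM (Rd d)) (ρ₁ : Rd d → ℝ), Measurable ρ₁ → (∀ x, 0 ≤ ρ₁ x) →
      (μ : Measure (Rd d)) = volume.withDensity (fun x => ENNReal.ofReal (ρ₁ x)) →
      Integrable ρ₁ (volume : Measure (Rd d)) ∧ (∫ x, ρ₁ x) = 1 ∧
        (∫ x, s x ∂(μ : Measure (Rd d))) = (∫ x, ρ₁ x * s x) ∧
        Integrable (fun x => ρ₁ x * s x) (volume : Measure (Rd d)) := by
    intro μ ρ₁ hm1 hnn1 hd1
    have hl : ∫⁻ x, ENNReal.ofReal (ρ₁ x) ∂(volume : Measure (Rd d)) = 1 := by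
      have h1 : ((volume : Measure (Rd d)).withDensity fun x => ENNReal.ofReal (ρ₁ x))
          Set.univ = 1 := by rw [← hd1]; exact measure_univ
      rwa [withDensity_apply _ MeasurableSet.univ, setLIntegral_univ] at h1
    have hint1 : Integrable ρ₁ (volume : Measure (Rd d)) := by
      refine ⟨hm1.aestronglyMeasurable, ?_⟩
      rw [hasFiniteIntegral_iff_norm]
      have he : (fun a => ENNReal.ofReal ‖ρ₁ a‖) = fun a => ENNReal.ofReal (ρ₁ a) := by
        funext a; rw [Real.norm_eq_abs, abs_of_nonneg (hnn1 a)]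
      rw [he, hl]; exact ENNReal.one_lt_top
    have hone : ∫ x, ρ₁ x = 1 := by
      rw [integral_eq_lintegral_of_nonneg_ae (Filter.Eventually.of_forall hnn1)
        hm1.aestronglyMeasurable, hl]
      simp
    have hi : (∫ x, s x ∂(μ : Measure (Rd d))) = ∫ x, ρ₁ x * s x := by
      rw [hd1]
      have heq : (fun x => ENNReal.ofReal (ρ₁ x))
          = fun x => (((fun y => (ρ₁ y).toNNReal) x : ℝ≥0) : ℝ≥0∞) := rfl
      rw [heq, integral_withDensity_eq_integral_smul hm1.real_toNNReal]
      congr 1; funext x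
      rw [NNReal.smul_def, Real.coe_toNNReal _ (hnn1 x), smul_eq_mul]
    have hmul_int : Integrable (fun x => ρ₁ x * s x) (volume : Measure (Rd d)) := by
      refine ((hint1.const_mul B).mono' (hm1.mul hs_meas).aestronglyMeasurable ?_)
      filter_upwards [hsb] with x hx
      rw [Real.norm_eq_abs, abs_mul, abs_of_nonneg (hnn1 x)]
      calc ρ₁ x * |s x| ≤ ρ₁ x * B := mul_le_mul_of_nonneg_left hx (hnn1 x)
        _ = B * ρ₁ x := mul_comm _ _
    exact ⟨hint1, hone, hi, hmul_int⟩
  -- integral of DF mstar against an absolutely continuous probability measure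
  have hacstar : (mstar : Measure (Rd d)) ≪ (volume : Measure (Rd d)) := by
    rw [hdens]; exact withDensity_absolutelyContinuous _ _
  have hDFeq : ∀ μ : PM (Rd d), (μ : Measure (Rd d)) ≪ (volume : Measure (Rd d)) →
      (∫ x, DF mstar x ∂(μ : Measure (Rd d)))
        = c - σ ^ 2 / 2 * ∫ x, s x ∂(μ : Measure (Rd d)) := by
    intro μ hac
    have hs_int : Integrable s (μ : Measure (Rd d)) := by
      refine (integrable_const B).mono' hs_meas.aestronglyMeasurable ?_
      filter_upwards [hac.ae_le hsb] with x hx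
      simpa [Real.norm_eq_abs] using hx
    have he : (fun x => DF mstar x) =ᵐ[(μ : Measure (Rd d))]
        fun x => c - σ ^ 2 / 2 * s x := by
      filter_upwards [hac.ae_le hfoc] with x hx
      simp only [hs_def]; linarith
    rw [integral_congr_ae he, integral_sub (integrable_const c) (hs_int.const_mul _),
      integral_const, integral_const_mul]
    simp
  -- entropy of mstar is given by ρ
  have hEx : ∃ ρ₀, EntPred U mstar ρ₀ := by
    by_contra h
    rw [relEnt, dif_neg h] at hent
    exact absurd hent (lt_irrefl _)
  have hdens_ae : ∀ ρ₀ : Rd d → ℝ, EntPred U mstar ρ₀ →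
      ρ₀ =ᵐ[(volume : Measure (Rd d))] ρ := by
    rintro ρ₀ ⟨hm0, hnn0, hd0, -⟩
    have hwd : (volume : Measure (Rd d)).withDensity (fun x => ENNReal.ofReal (ρ₀ x))
        = (volume : Measure (Rd d)).withDensity (fun x => ENNReal.ofReal (ρ x)) := by
      rw [← hd0, ← hdens]
    have hae := (withDensity_eq_iff_of_sigmaFinite
      ((ENNReal.measurable_ofReal.comp hm0).aemeasurable)
      ((ENNReal.measurable_ofReal.comp hρ_meas).aemeasurable)).mp hwd
    filter_upwards [hae] with x hx
    exact (ENNReal.ofReal_eq_ofReal_iff (hnn0 x) (hρ_nonneg x)).mp hx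
  have hrelstar : relEnt U mstar
      = ((∫ x, (ρ x * Real.log (ρ x) + ρ x * U x) : ℝ) : EReal) := by
    rw [relEnt, dif_pos hEx]
    congr 1
    apply integral_congr_ae
    filter_upwards [hdens_ae _ hEx.choose_spec] with x hx
    rw [hx]
  have hAstar_int : Integrable (fun x => ρ x * Real.log (ρ x) + ρ x * U x)
      (volume : Measure (Rd d)) := by
    refine hEx.choose_spec.2.2.2.congr ?_
    filter_upwards [hdens_ae _ hEx.choose_spec] with x hx
    rw [hx]
  by_cases hm : ∃ ρ', EntPred U m ρ'
  · -- the finite entropy case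
    obtain ⟨hρ'_meas, hρ'_nn, hdens', hA_int⟩ := hm.choose_spec
    have hrelm : relEnt U m = ((∫ x, (hm.choose x * Real.log (hm.choose x)
        + hm.choose x * U x) : ℝ) : EReal) := by
      rw [relEnt, dif_pos hm]
    have hac : (m : Measure (Rd d)) ≪ (volume : Measure (Rd d)) := by
      rw [hdens']; exact withDensity_absolutelyContinuous _ _
    obtain ⟨hρ'_int, hi2, hi1, hi3⟩ := hkey m hm.choose hρ'_meas hρ'_nn hdens'
    obtain ⟨hρ_int, hj2, hj1, hj3⟩ := hkey mstar ρ hρ_meas hρ_nonneg hdens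
    have hgrad := grad_ineq hC1 hConv mstar m
    rw [hDFeq m hac, hDFeq mstar hacstar, hi1, hj1] at hgrad
    -- the entropy integrand of mstar equals ρ * s
    have hJ : (∫ x, ρ x * s x) = ∫ x, (ρ x * Real.log (ρ x) + ρ x * U x) := by
      congr 1; funext x; simp only [hs_def]; ring
    -- pointwise KL bound
    have hptwise : ∀ᵐ x ∂(volume : Measure (Rd d)),
        hm.choose x - ρ x ≤ (hm.choose x * Real.log (hm.choose x)
          + hm.choose x * U x) - hm.choose x * s x := by
      filter_upwards [hρ_pos] with x hρx
      simp only [hs_def]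
      rcases eq_or_lt_of_le (hρ'_nn x) with h0 | hpos
      · rw [← h0]
        simp only [zero_mul, zero_sub, zero_add, sub_zero, add_zero, zero_sub, neg_zero]
        linarith [hρ_nonneg x]
      · have hlog := Real.log_le_sub_one_of_pos (div_pos hρx hpos)
        rw [Real.log_div (ne_of_gt hρx) (ne_of_gt hpos)] at hlog
        have hcan : hm.choose x * (ρ x / hm.choose x) = ρ x :=
          mul_div_cancel₀ _ (ne_of_gt hpos)
        nlinarith [mul_le_mul_of_nonneg_left hlog hpos.le]
    have hKL : 0 ≤ (∫ x, (hm.choose x * Real.log (hm.choose x) + hm.choose x * U x))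
        - ∫ x, hm.choose x * s x := by
      have hmono := integral_mono_ae (hρ'_int.sub hρ_int) (hA_int.sub hi3) hptwise
      simp only [Pi.sub_apply] at hmono
      rw [integral_sub hρ'_int hρ_int, integral_sub hA_int hi3, hi2, hj2] at hmono
      linarith
    rw [freeEnergy, freeEnergy, hrelstar, hrelm, ← EReal.coe_mul, ← EReal.coe_mul,
      ← EReal.coe_add, ← EReal.coe_add, EReal.coe_le_coe_iff]
    rw [hJ] at hgrad
    nlinarith [mul_nonneg hσ2.le hKL, hgrad]
  · -- infinite entropy case
    have htop : relEnt U m = ⊤ := by rw [relEnt, dif_neg hm]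
    have hrtop : freeEnergy σ U F m = ⊤ := by
      rw [freeEnergy, htop, EReal.mul_top_of_pos (EReal.coe_pos.mpr hσ2),
        EReal.add_top_of_ne_bot (EReal.coe_ne_bot _)]
    rw [hrtop]; exact le_top

end
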